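/- arXiv:2209.07698 — 4 statements merged into one kernel-verified Lean document; each statement's English description precedes it below -/
import Mathlib

section
/- Let X_1, X_2, ... be i.i.d. uniform random variables on {1,2,3,4,5,6}, S_n = X_1 + ... + X_n, and τ = min{n ≥ 1 : S_n is prime}. Then τ is finite almost surely. -/
/-!
A walk with steps in `{1, …, d}` crosses a level `p > 0` at a unique step: it stands at some
`m < p`, and its next step `X`, uniform and independent of the past, reaches `p` or beyond.
Landing exactly on `p` has probability `1/d`, so overshooting has probability
`μ {p - m ≤ X} - 1/d ≤ (1 - 1/d) μ {p - m ≤ X}`. Summing over the crossing step and position, for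
`p ∈ A` the walk avoids `A` up to `p` with probability at most `1 - 1/d` times that of avoiding `A`
below `p`. As `A` is infinite, this bounds the probability of never hitting `A` by `(1 - 1/d)^k`
for every `k`.
-/

open MeasureTheory ProbabilityTheory

/-- Sum of the first `n` dice. -/
def diceSum {Ω : Type*} (X : ℕ → Ω → ℕ) (n : ℕ) (ω : Ω) : ℕ :=
  ∑ i ∈ Finset.range n, X i ω

/-- `p(k,n)`: probability that `S_k = n` and `S_i` is not prime for all `1 ≤ i < k`. -/
noncomputable def hitProb {Ω : Type*} [MeasurableSpace Ω] (μ : Measure Ω)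
    (X : ℕ → Ω → ℕ) (k n : ℕ) : ℝ :=
  (μ {ω | diceSum X k ω = n ∧ ∀ i, 1 ≤ i → i < k → ¬ (diceSum X i ω).Prime}).toReal

open scoped ENNReal Function

section

variable {Ω : Type*} {X : ℕ → Ω → ℕ}

@[simp] lemma diceSum_zero (ω : Ω) : diceSum X 0 ω = 0 := by simp [diceSum]

lemma diceSum_succ (n : ℕ) (ω : Ω) : diceSum X (n + 1) ω = diceSum X n ω + X n ω :=
  Finset.sum_range_succ _ _

lemma monotone_diceSum (X : ℕ → Ω → ℕ) (ω : Ω) : Monotone fun n => diceSum X n ω :=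
  fun _ _ h => Finset.sum_le_sum_of_subset (Finset.range_subset_range.2 h)

lemma le_diceSum (hX : ∀ i ω, 1 ≤ X i ω) (n : ℕ) (ω : Ω) : n ≤ diceSum X n ω := by
  simpa [diceSum] using
    Finset.card_nsmul_le_sum (Finset.range n) (X · ω) 1 fun i _ => hX i ω

lemma diceSum_congr {n : ℕ} {ω ω' : Ω} (h : ∀ i < n, X i ω = X i ω') {k : ℕ} (hk : k ≤ n) :
    diceSum X k ω = diceSum X k ω' :=
  Finset.sum_congr rfl fun i hi => h i ((Finset.mem_range.1 hi).trans_le hk)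

lemma exists_diceSum_lt_le_succ (hX : ∀ i ω, 1 ≤ X i ω) {p : ℕ} (hp : 0 < p) (ω : Ω) :
    ∃ n, diceSum X n ω < p ∧ p ≤ diceSum X (n + 1) ω := by
  classical
  have hreach : ∃ k, p ≤ diceSum X k ω := ⟨p, le_diceSum hX p ω⟩
  obtain ⟨n, hn⟩ : ∃ n, Nat.find hreach = n + 1 :=
    Nat.exists_eq_add_one.2 (Nat.pos_of_ne_zero fun h => by
      have := Nat.find_spec hreach; rw [h, diceSum_zero] at this; omega)
  exact ⟨n, not_le.1 (Nat.find_min hreach (by omega)), hn ▸ Nat.find_spec hreach⟩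

def reachAvoiding (X : ℕ → Ω → ℕ) (A : Set ℕ) (n m : ℕ) : Set Ω :=
  {ω | diceSum X n ω = m ∧ ∀ i, 1 ≤ i → i ≤ n → diceSum X i ω ∉ A}

def avoidsBelow (X : ℕ → Ω → ℕ) (A : Set ℕ) (p : ℕ) : Set Ω :=
  {ω | ∀ i, 1 ≤ i → diceSum X i ω < p → diceSum X i ω ∉ A}

/-- For `q = p` these are the disjoint ways of crossing level `p`; for `q = p + 1` they cover the
ways of jumping over it. -/
def leap (X : ℕ → Ω → ℕ) (A : Set ℕ) (p q n m : ℕ) : Set Ω :=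
  reachAvoiding X A n m ∩ {ω | m < p ∧ q ≤ m + X n ω}

variable {A : Set ℕ} {p : ℕ}

lemma avoidsBelow_antitone : Antitone (avoidsBelow X A) :=
  fun _ _ hpq _ hω i hi hlt => hω i hi (hlt.trans_le hpq)

lemma avoidsBelow_succ_subset_iUnion_leap (hX : ∀ i ω, 1 ≤ X i ω) (hpA : p ∈ A)
    (hp : 0 < p) :
    avoidsBelow X A (p + 1) ⊆ ⋃ nm : ℕ × ℕ, leap X A p (p + 1) nm.1 nm.2 := by
  intro ω hω
  obtain ⟨n, hlt, hle⟩ := exists_diceSum_lt_le_succ hX hp ω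
  have hne : diceSum X (n + 1) ω ≠ p := fun h => hω (n + 1) n.succ_pos (by omega) (h ▸ hpA)
  refine Set.mem_iUnion.2 ⟨(n, diceSum X n ω), ⟨rfl, fun i hi hin => hω i hi ?_⟩, hlt, ?_⟩
  · exact Nat.lt_succ_of_le ((monotone_diceSum X ω hin).trans hlt.le)
  · dsimp only; rw [diceSum_succ] at hle hne; omega

lemma diceSum_lt_and_le_succ_of_mem_leap {q n m : ℕ} {ω : Ω} (h : ω ∈ leap X A p q n m) :
    diceSum X n ω < p ∧ q ≤ diceSum X (n + 1) ω := by
  obtain ⟨⟨hm, -⟩, hmp, hq⟩ := h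
  rw [diceSum_succ, hm]; exact ⟨hm ▸ hmp, hq⟩

lemma iUnion_leap_subset_avoidsBelow :
    ⋃ nm : ℕ × ℕ, leap X A p p nm.1 nm.2 ⊆ avoidsBelow X A p := by
  simp only [Set.iUnion_subset_iff, Prod.forall]
  intro n m ω hω i hi hip
  refine hω.1.2 i hi (not_lt.1 fun hni => ?_)
  exact hip.not_ge ((diceSum_lt_and_le_succ_of_mem_leap hω).2.trans (monotone_diceSum X ω hni))

lemma pairwise_disjoint_leap :
    Pairwise (Disjoint on fun nm : ℕ × ℕ => leap X A p p nm.1 nm.2) := by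
  rintro ⟨n, m⟩ ⟨n', m'⟩ hne
  refine Set.disjoint_left.2
    fun ω (hω : ω ∈ leap X A p p n m) (hω' : ω ∈ leap X A p p n' m') => ?_
  have before_crossing : ∀ {k l}, diceSum X k ω < p → p ≤ diceSum X (l + 1) ω → k ≤ l :=
    fun hk hl => not_lt.1 fun h => (hk.trans_le hl).not_ge (monotone_diceSum X ω h)
  obtain ⟨h1, h2⟩ := diceSum_lt_and_le_succ_of_mem_leap hω
  obtain ⟨h1', h2'⟩ := diceSum_lt_and_le_succ_of_mem_leap hω'
  obtain rfl : n = n' := (before_crossing h1 h2').antisymm (before_crossing h1' h2)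
  exact hne (Prod.ext rfl (hω.1.1.symm.trans hω'.1.1))

end

section

variable {Ω : Type*} [MeasurableSpace Ω] {μ : Measure Ω}

lemma ProbabilityTheory.iIndepFun.measure_inter_preimage_eq_mul_of_determined_before
    {β : Type*} [MeasurableSpace β] [Countable β] [MeasurableSingletonClass β] {X : ℕ → Ω → β}
    (hmeas : ∀ i, Measurable (X i)) (hindep : iIndepFun X μ) {n : ℕ} {E : Set Ω}
    (hE : ∀ ω ω', (∀ i < n, X i ω = X i ω') → ω ∈ E → ω' ∈ E) (B : Set β) :
    μ (E ∩ X n ⁻¹' B) = μ E * μ (X n ⁻¹' B) := by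
  set past : Ω → (Finset.range n → β) := fun ω i => X i ω
  set now : Ω → (({n} : Finset ℕ) → β) := fun ω i => X i ω
  have hpast : E = past ⁻¹' (past '' E) := by
    refine (Set.subset_preimage_image _ _).antisymm ?_
    rintro ω ⟨ω', hω', hsame⟩
    exact hE ω' ω (fun i hi => congrFun hsame ⟨i, Finset.mem_range.2 hi⟩) hω'
  have hnow : X n ⁻¹' B = now ⁻¹' {x | x ⟨n, Finset.mem_singleton_self n⟩ ∈ B} := rfl
  rw [hpast, hnow]
  exact (hindep.indepFun_finset _ _ (by simp) hmeas).measure_inter_preimage_eq_mul _ _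
    (Set.to_countable _).measurableSet (Set.to_countable _).measurableSet

lemma measure_lt_le_one_sub_inv_mul [IsProbabilityMeasure μ] {Y : Ω → ℕ} {d r : ℕ}
    (hY : Measurable Y) (hunif : ∀ v ∈ Finset.Icc 1 d, μ {ω | Y ω = v} = (d : ℝ≥0∞)⁻¹)
    (hrange : ∀ ω, Y ω ∈ Finset.Icc 1 d) (hr : 1 ≤ r) :
    μ {ω | r < Y ω} ≤ (1 - (d : ℝ≥0∞)⁻¹) * μ {ω | r ≤ Y ω} := by
  rcases le_or_gt r d with hrd | hdr
  · have hsplit : μ {ω | r ≤ Y ω} = μ {ω | Y ω = r} + μ {ω | r < Y ω} := by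
      rw [← measure_union _ (measurableSet_lt measurable_const hY)]
      · congr 1; ext ω; simp [le_iff_eq_or_lt, eq_comm]
      · exact Set.disjoint_left.2 fun ω (h1 : Y ω = r) (h2 : r < Y ω) => h2.ne' h1
    calc μ {ω | r < Y ω} = μ {ω | r ≤ Y ω} - μ {ω | Y ω = r} := by
          rw [hsplit, ENNReal.add_sub_cancel_left (measure_ne_top _ _)]
      _ ≤ μ {ω | r ≤ Y ω} - (d : ℝ≥0∞)⁻¹ * μ {ω | r ≤ Y ω} := by
          rw [hunif r (Finset.mem_Icc.2 ⟨hr, hrd⟩)]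
          exact tsub_le_tsub_left (mul_le_of_le_one_right' prob_le_one) _
      _ = (1 - (d : ℝ≥0∞)⁻¹) * μ {ω | r ≤ Y ω} := by
          rw [ENNReal.sub_mul fun _ _ => measure_ne_top _ _, one_mul]
  · have hempty : {ω | r < Y ω} = ∅ := Set.eq_empty_of_forall_notMem
      fun ω (h : r < Y ω) => lt_asymm h ((Finset.mem_Icc.1 (hrange ω)).2.trans_lt hdr)
    simp [hempty]

variable {X : ℕ → Ω → ℕ} {A : Set ℕ} {p : ℕ}

lemma measurable_diceSum (hmeas : ∀ i, Measurable (X i)) (n : ℕ) : Measurable (diceSum X n) :=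
  Finset.measurable_sum _ fun i _ => hmeas i

lemma measurableSet_leap (hmeas : ∀ i, Measurable (X i)) (q n m : ℕ) :
    MeasurableSet (leap X A p q n m) := by
  have := measurable_diceSum hmeas
  unfold leap reachAvoiding
  measurability

lemma measure_leap_succ_le [IsProbabilityMeasure μ] {d : ℕ}
    (hmeas : ∀ i, Measurable (X i)) (hindep : iIndepFun X μ)
    (hunif : ∀ i, ∀ v ∈ Finset.Icc 1 d, μ {ω | X i ω = v} = (d : ℝ≥0∞)⁻¹)
    (hrange : ∀ i ω, X i ω ∈ Finset.Icc 1 d) (n m : ℕ) :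
    μ (leap X A p (p + 1) n m) ≤ (1 - (d : ℝ≥0∞)⁻¹) * μ (leap X A p p n m) := by
  rcases lt_or_ge m p with hm | hm
  · have hpast : ∀ ω ω', (∀ i < n, X i ω = X i ω') →
        ω ∈ reachAvoiding X A n m → ω' ∈ reachAvoiding X A n m := by
      rintro ω ω' h ⟨hS, havoid⟩
      exact ⟨diceSum_congr h le_rfl ▸ hS, fun i hi hin => diceSum_congr h hin ▸ havoid i hi hin⟩
    have hover : leap X A p (p + 1) n m = reachAvoiding X A n m ∩ X n ⁻¹' {x | p - m < x} := by
      ext ω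
      exact and_congr_right' (show m < p ∧ p + 1 ≤ m + X n ω ↔ p - m < X n ω by omega)
    have hcross : leap X A p p n m = reachAvoiding X A n m ∩ X n ⁻¹' {x | p - m ≤ x} := by
      ext ω
      exact and_congr_right' (show m < p ∧ p ≤ m + X n ω ↔ p - m ≤ X n ω by omega)
    rw [hover, hcross, hindep.measure_inter_preimage_eq_mul_of_determined_before hmeas hpast,
      hindep.measure_inter_preimage_eq_mul_of_determined_before hmeas hpast, mul_left_comm]
    gcongr
    exact measure_lt_le_one_sub_inv_mul (hmeas n) (hunif n) (hrange n) (by omega)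
  · simp [leap, hm.not_gt]

lemma measure_avoidsBelow_succ_le [IsProbabilityMeasure μ] {d : ℕ}
    (hmeas : ∀ i, Measurable (X i)) (hindep : iIndepFun X μ)
    (hunif : ∀ i, ∀ v ∈ Finset.Icc 1 d, μ {ω | X i ω = v} = (d : ℝ≥0∞)⁻¹)
    (hrange : ∀ i ω, X i ω ∈ Finset.Icc 1 d) (hpA : p ∈ A) (hp : 0 < p) :
    μ (avoidsBelow X A (p + 1)) ≤ (1 - (d : ℝ≥0∞)⁻¹) * μ (avoidsBelow X A p) :=
  calc μ (avoidsBelow X A (p + 1))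
      ≤ ∑' nm : ℕ × ℕ, μ (leap X A p (p + 1) nm.1 nm.2) :=
        (measure_mono (avoidsBelow_succ_subset_iUnion_leap
          (fun i ω => (Finset.mem_Icc.1 (hrange i ω)).1) hpA hp)).trans (measure_iUnion_le _)
    _ ≤ ∑' nm : ℕ × ℕ, (1 - (d : ℝ≥0∞)⁻¹) * μ (leap X A p p nm.1 nm.2) :=
        ENNReal.tsum_le_tsum fun nm => measure_leap_succ_le hmeas hindep hunif hrange _ _
    _ = (1 - (d : ℝ≥0∞)⁻¹) * μ (⋃ nm : ℕ × ℕ, leap X A p p nm.1 nm.2) := by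
        rw [ENNReal.tsum_mul_left, measure_iUnion pairwise_disjoint_leap
          fun nm => measurableSet_leap hmeas _ _ _]
    _ ≤ (1 - (d : ℝ≥0∞)⁻¹) * μ (avoidsBelow X A p) := by
        gcongr; exact iUnion_leap_subset_avoidsBelow

theorem ae_exists_diceSum_mem [IsProbabilityMeasure μ] {d : ℕ}
    (hmeas : ∀ i, Measurable (X i)) (hindep : iIndepFun X μ)
    (hunif : ∀ i, ∀ v ∈ Finset.Icc 1 d, μ {ω | X i ω = v} = (d : ℝ≥0∞)⁻¹)
    (hrange : ∀ i ω, X i ω ∈ Finset.Icc 1 d) (hA : A.Infinite) :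
    ∀ᵐ ω ∂μ, ∃ n, 1 ≤ n ∧ diceSum X n ω ∈ A := by
  set c : ℝ≥0∞ := 1 - (d : ℝ≥0∞)⁻¹
  have hc : c < 1 := ENNReal.sub_lt_self ENNReal.one_ne_top one_ne_zero
    (ENNReal.inv_ne_zero.2 (ENNReal.natCast_ne_top d))
  have hpow : ∀ k, ∃ p, μ (avoidsBelow X A p) ≤ c ^ k := by
    intro k
    induction k with
    | zero => exact ⟨0, by simpa using prob_le_one⟩
    | succ k ih =>
      obtain ⟨p, hp⟩ := ih
      obtain ⟨q, hqA, hpq⟩ := hA.exists_gt p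
      refine ⟨q + 1, ?_⟩
      calc μ (avoidsBelow X A (q + 1))
          ≤ c * μ (avoidsBelow X A q) :=
            measure_avoidsBelow_succ_le hmeas hindep hunif hrange hqA (by omega)
        _ ≤ c * c ^ k := by gcongr; exact (measure_mono (avoidsBelow_antitone hpq.le)).trans hp
        _ = c ^ (k + 1) := (pow_succ' c k).symm
  have hnever : ∀ p, {ω | ¬∃ n, 1 ≤ n ∧ diceSum X n ω ∈ A} ⊆ avoidsBelow X A p :=
    fun _ ω hω i hi _ hiA => hω ⟨i, hi, hiA⟩
  have hle : ∀ k, μ {ω | ¬∃ n, 1 ≤ n ∧ diceSum X n ω ∈ A} ≤ c ^ k := fun k => by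
    obtain ⟨p, hp⟩ := hpow k
    exact (measure_mono (hnever p)).trans hp
  rw [ae_iff]
  exact le_antisymm (ge_of_tendsto' (ENNReal.tendsto_pow_atTop_nhds_zero_of_lt_one hc) hle)
    bot_le

end

/-- The first hitting time of the primes by the running sum of i.i.d. fair dice
is finite almost surely. -/
theorem tau_finite_as
    {Ω : Type*} [MeasurableSpace Ω] (μ : Measure Ω) [IsProbabilityMeasure μ]
    (X : ℕ → Ω → ℕ) (hmeas : ∀ i, Measurable (X i))
    (hindep : iIndepFun X μ)
    (hunif : ∀ i v, v ∈ Finset.Icc 1 6 → μ {ω | X i ω = v} = 1/6)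
    (hrange : ∀ i ω, X i ω ∈ Finset.Icc 1 6) :
    ∀ᵐ ω ∂μ, ∃ n, 1 ≤ n ∧ (diceSum X n ω).Prime :=
  ae_exists_diceSum_mem (d := 6) (A := {p | p.Prime}) hmeas hindep
    (fun i v hv => by simpa using hunif i v hv) hrange Nat.infinite_setOfPred_prime
end

section
/- Let n be a non-prime integer and suppose there are exactly q primes in the set {n-6, n-5, ..., n-1}. Then for every non-prime m ∈ {n-6,...,n-1}, π(m) ≥ π(n) - q, where π(x) denotes the number of primes strictly less than x. Consequently, (1/6)·(6-q)·(1/3)·(5/6)^{π(n)-q} ≤ (1/3)·(5/6)^{π(n)}. -/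
/-!
The primes below `n` that are not below `m` lie in `[m, n)`, so for `m` in the window
`{n-6, …, n-1}` the prime count drops by at most the number `q` of primes in the window.
For the weights, Bernoulli's inequality gives `(6 - q)/6 = 1 - q/6 ≤ (5/6)^q`, which absorbs
the factor `(6/5)^q` lost by lowering the exponent from `π(n)` to `π(n) - q`.
-/

open Finset

theorem Nat.primeCounting'_eq_add_card_filter_Ico {m n : ℕ} (hmn : m ≤ n) :
    Nat.primeCounting' n = Nat.primeCounting' m + #{p ∈ Ico m n | p.Prime} := by
  simp only [Nat.primeCounting', Nat.count_eq_card_filter_range, range_eq_Ico]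
  rw [← Ico_union_Ico_eq_Ico (Nat.zero_le m) hmn, filter_union,
    card_union_of_disjoint (disjoint_filter_filter (Ico_disjoint_Ico_consecutive 0 m n))]

theorem one_sub_mul_mul_pow_tsub_le_pow {a : ℝ} (ha₀ : 0 ≤ a) (ha₁ : a ≤ 1) (q k : ℕ) :
    (1 - q * (1 - a)) * a ^ (k - q) ≤ a ^ k :=
  calc (1 - q * (1 - a)) * a ^ (k - q)
      ≤ a ^ q * a ^ (k - q) := by
        have bernoulli := one_add_mul_le_pow (a := a - 1) (by linarith) q
        rw [add_sub_cancel] at bernoulli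
        gcongr
        linarith
    _ = a ^ (q + (k - q)) := (pow_add a q (k - q)).symm
    _ ≤ a ^ k := pow_le_pow_of_le_one ha₀ ha₁ (by omega)

theorem key_inductive_step_general (n : ℕ)
    (q : ℕ) (hq : q = ((Finset.Icc (n - 6) (n - 1)).filter Nat.Prime).card) :
    (∀ m ∈ Finset.Icc (n - 6) (n - 1), ¬ m.Prime →
        Nat.primeCounting' n - q ≤ Nat.primeCounting' m) ∧
    (1/6 : ℝ) * (6 - q) * (1/3) * (5/6 : ℝ) ^ (Nat.primeCounting' n - q) ≤
      (1/3 : ℝ) * (5/6 : ℝ) ^ (Nat.primeCounting' n) := by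
  refine ⟨fun m hm _ ↦ ?_, ?_⟩
  · obtain ⟨hm₁, hm₂⟩ := mem_Icc.mp hm
    have hwindow : Ico m n ⊆ Icc (n - 6) (n - 1) := fun x hx ↦ by
      rw [mem_Ico] at hx
      rw [mem_Icc]
      omega
    have hcard : #{p ∈ Ico m n | p.Prime} ≤ q :=
      hq ▸ card_le_card (filter_subset_filter _ hwindow)
    rw [Nat.primeCounting'_eq_add_card_filter_Ico (by omega : m ≤ n)]
    omega
  · calc (1/6 : ℝ) * (6 - q) * (1/3) * (5/6 : ℝ) ^ (Nat.primeCounting' n - q)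
        = 1/3 * ((1 - q * (1 - 5/6)) * (5/6 : ℝ) ^ (Nat.primeCounting' n - q)) := by ring
      _ ≤ 1/3 * (5/6 : ℝ) ^ Nat.primeCounting' n := by
        gcongr
        exact one_sub_mul_mul_pow_tsub_le_pow (by norm_num) (by norm_num) _ _

/-- If `n` is non-prime and `q` is the number of primes in `{n-6,…,n-1}`, then every
non-prime `m` in that interval satisfies `π(m) ≥ π(n) - q`, and
`(1/6)·(6-q)·(1/3)·(5/6)^{π(n)-q} ≤ (1/3)·(5/6)^{π(n)}`, where `π(x)` counts primes
strictly below `x`. -/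
theorem key_inductive_step (n : ℕ) (hn : ¬ n.Prime)
    (q : ℕ) (hq : q = ((Finset.Icc (n - 6) (n - 1)).filter Nat.Prime).card) :
    (∀ m ∈ Finset.Icc (n - 6) (n - 1), ¬ m.Prime →
        Nat.primeCounting' n - q ≤ Nat.primeCounting' m) ∧
    (1/6 : ℝ) * (6 - q) * (1/3) * (5/6 : ℝ) ^ (Nat.primeCounting' n - q) ≤
      (1/3 : ℝ) * (5/6 : ℝ) ^ (Nat.primeCounting' n) :=
  key_inductive_step_general n q hq
end

section
/- With f(n) = (n - 1000)·(1/3)·(5/6)^{0.9·n/ln n}, the sum Σ_{n ≥ 1000} f(n) < 7·10^{-8}. -/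
/-!
Applying `log y ≤ y - 1` to `y = √(x / 2 ^ 10)` gives `log x < √x / 16 + 4.9315` for `x > 0`.
On `[1000, 2000]` this keeps the exponent `0.9 x / log x` above the line `130 + (x - 1000) / 10`,
so there `f (1000 + m) ≤ (5/6)^130 / 3 · m ρ^m` with `ρ = (5/6)^(1/10)`, an arithmetico-geometric
series of sum `(5/6)^130 ρ / (3 (1 - ρ)^2) < 6·10⁻⁸`. Beyond `2000` the exponent exceeds
`30 log x`, so `f n ≤ n⁻⁴`, which is dominated by a telescoping series of sum `10⁻⁹`.
-/

/-- The tail-bounding function `f(n) = (n - 1000)·(1/3)·(5/6)^{0.9 n / ln n}`. -/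
noncomputable def tailF (n : ℕ) : ℝ :=
  ((n : ℝ) - 1000) * (1/3) * (5/6 : ℝ) ^ (0.9 * (n : ℝ) / Real.log n)

open Real

theorem log_le_log_add_two_mul_sqrt_div_sub_one {a x : ℝ} (ha : 0 < a) (hx : 0 < x) :
    log x ≤ log a + 2 * (√(x / a) - 1) := by
  have hxa : 0 < x / a := div_pos hx ha
  have h := log_le_sub_one_of_pos (sqrt_pos.mpr hxa)
  rw [log_sqrt hxa.le, log_div hx.ne' ha.ne'] at h
  linarith

theorem log_lt_sqrt_div_sixteen_add {x : ℝ} (hx : 0 < x) : log x < √x / 16 + 4.9315 := by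
  have h := log_le_log_add_two_mul_sqrt_div_sub_one (by norm_num : (0 : ℝ) < 2 ^ 10) hx
  rw [log_pow, sqrt_div' _ (by norm_num), show √((2 : ℝ) ^ 10) = 32 by
    rw [show (2 : ℝ) ^ 10 = 32 ^ 2 by norm_num, sqrt_sq (by norm_num)]] at h
  have := log_two_lt_d9
  push_cast at h
  linarith

theorem linear_le_div_log {x : ℝ} (h₁ : 1000 ≤ x) (h₂ : x ≤ 2000) :
    130 + (x - 1000) / 10 ≤ 0.9 * x / log x := by
  have hlog : 0 < log x := log_pos (by linarith)
  have hlog_le := log_lt_sqrt_div_sixteen_add (by linarith : 0 < x)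
  have hsq : √x ^ 2 = x := sq_sqrt (by linarith)
  have hlo : 31.6 ≤ √x := by nlinarith [sqrt_nonneg x]
  have hhi : √x ≤ 44.73 := by nlinarith [sqrt_nonneg x]
  have hcubic : (130 + (x - 1000) / 10) * (√x / 16 + 4.9315) ≤ 0.9 * x := by
    generalize √x = s at hsq hlo hhi
    subst hsq
    nlinarith [mul_nonneg (sub_nonneg.2 hlo) (sub_nonneg.2 hhi)]
  rw [le_div_iff₀ hlog]
  nlinarith

theorem thirty_mul_log_le_div_log {x : ℝ} (hx : 2000 ≤ x) : 30 * log x ≤ 0.9 * x / log x := by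
  have hlog : 0 < log x := log_pos (by linarith)
  have hlog_le := log_lt_sqrt_div_sixteen_add (by linarith : 0 < x)
  have hsq : √x ^ 2 = x := sq_sqrt (by linarith)
  have hlo : 44.72 ≤ √x := by nlinarith [sqrt_nonneg x]
  rw [le_div_iff₀ hlog]
  nlinarith

theorem five_sixths_rpow_thirty_mul_log_le {x : ℝ} (hx : 0 < x) (hlog : 0 ≤ log x) :
    (5 / 6 : ℝ) ^ (30 * log x) ≤ (x ^ 5)⁻¹ := by
  have hlog_five_sixths : log (5 / 6 : ℝ) ≤ -(1 / 6) := by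
    linarith [log_le_sub_one_of_pos (by norm_num : (0 : ℝ) < 5 / 6)]
  rw [rpow_def_of_pos (by norm_num), ← exp_log (inv_pos.2 (pow_pos hx 5)), log_inv, log_pow]
  gcongr
  push_cast
  nlinarith

theorem five_sixths_rpow_inv_ten_le : (5 / 6 : ℝ) ^ (10⁻¹ : ℝ) ≤ 0.983 := by
  refine le_of_pow_le_pow_left₀ (n := 10) (by norm_num) (by norm_num) ?_
  rw [show (10⁻¹ : ℝ) = ((10 : ℕ) : ℝ)⁻¹ by norm_num,
    rpow_inv_natCast_pow (by norm_num) (by norm_num)]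
  norm_num

open Filter Finset in
theorem hasSum_one_div_add_mul_add_add_one {a : ℝ} (ha : 0 < a) :
    HasSum (fun m : ℕ => 1 / ((a + m) * (a + m + 1))) (1 / a) := by
  have partial_sum (N : ℕ) :
      ∑ m ∈ range N, 1 / ((a + m) * (a + m + 1)) = 1 / a - 1 / (a + N) := by
    induction N with
    | zero => simp
    | succ N ih =>
      rw [sum_range_succ, ih]
      push_cast
      field_simp
      ring
  rw [hasSum_iff_tendsto_nat_of_nonneg (fun m => by positivity)]
  simp_rw [partial_sum, one_div (a + _)]
  simpa using tendsto_const_nhds.sub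
    (tendsto_atTop_add_const_left _ a tendsto_natCast_atTop_atTop).inv_tendsto_atTop

theorem tailF_nonneg {n : ℕ} (hn : 1000 ≤ n) : 0 ≤ tailF n := by
  have : (1000 : ℝ) ≤ n := by exact_mod_cast hn
  have := rpow_pos_of_pos (by norm_num : (0 : ℝ) < 5 / 6) (0.9 * (n : ℝ) / log n)
  unfold tailF
  positivity

theorem tailF_le_of_le_exponent {n : ℕ} (hn : 1000 ≤ n) {e : ℝ}
    (he : e ≤ 0.9 * (n : ℝ) / log n) : tailF n ≤ ((n : ℝ) - 1000) / 3 * (5 / 6 : ℝ) ^ e := by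
  have : (1000 : ℝ) ≤ n := by exact_mod_cast hn
  have hpow := rpow_le_rpow_of_exponent_ge (by norm_num : (0 : ℝ) < 5 / 6) (by norm_num) he
  unfold tailF
  rw [mul_one_div]
  exact mul_le_mul_of_nonneg_left hpow (by linarith)

theorem tailF_add_le_geometric {m : ℕ} (hm : m ≤ 1000) :
    tailF (1000 + m) ≤ (5 / 6 : ℝ) ^ 130 / 3 * (m * ((5 / 6 : ℝ) ^ (10⁻¹ : ℝ)) ^ m) := by
  have hm' : (m : ℝ) ≤ 1000 := by exact_mod_cast hm
  have he := linear_le_div_log (x := ((1000 + m : ℕ) : ℝ)) (by push_cast; linarith)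
    (by push_cast; linarith)
  refine (tailF_le_of_le_exponent (by omega) he).trans (le_of_eq ?_)
  rw [← rpow_natCast _ m, ← rpow_mul (by norm_num), rpow_add (by norm_num),
    ← rpow_natCast _ 130]
  push_cast
  ring_nf

theorem tailF_le_inv_pow_four {n : ℕ} (hn : 2000 ≤ n) : tailF n ≤ 1 / (n : ℝ) ^ 4 := by
  have hx : (2000 : ℝ) ≤ n := by exact_mod_cast hn
  have hlog : 0 ≤ log (n : ℝ) := log_nonneg (by linarith)
  refine (tailF_le_of_le_exponent (by omega) (thirty_mul_log_le_div_log hx)).trans ?_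
  calc ((n : ℝ) - 1000) / 3 * (5 / 6 : ℝ) ^ (30 * log n)
      ≤ n * ((n : ℝ) ^ 5)⁻¹ := by
        gcongr
        · linarith
        · exact five_sixths_rpow_thirty_mul_log_le (by linarith) hlog
    _ = 1 / (n : ℝ) ^ 4 := by field_simp

theorem tailF_add_le_majorant (m : ℕ) :
    tailF (1000 + m) ≤ (5 / 6 : ℝ) ^ 130 / 3 * (m * ((5 / 6 : ℝ) ^ (10⁻¹ : ℝ)) ^ m)
      + 1e-6 * (1 / ((1000 + m) * (1000 + m + 1))) := by
  have hgeom : 0 ≤ (5 / 6 : ℝ) ^ 130 / 3 * (m * ((5 / 6 : ℝ) ^ (10⁻¹ : ℝ)) ^ m) := by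
    positivity
  have htele : (0 : ℝ) ≤ 1e-6 * (1 / ((1000 + m) * (1000 + m + 1))) := by positivity
  rcases le_total m 1000 with hm | hm
  · linarith [tailF_add_le_geometric hm]
  · have hx : (2000 : ℝ) ≤ 1000 + m := by
      have : (1000 : ℝ) ≤ m := by exact_mod_cast hm
      linarith
    have h := tailF_le_inv_pow_four (n := 1000 + m) (by omega)
    push_cast at h
    have : 1 / (1000 + (m : ℝ)) ^ 4 ≤ 1e-6 * (1 / ((1000 + m) * (1000 + m + 1))) := by
      rw [mul_one_div, div_le_div_iff₀ (by positivity) (by positivity)]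
      generalize 1000 + (m : ℝ) = x at hx ⊢
      have hx2 : 4e6 ≤ x ^ 2 := by nlinarith
      nlinarith [mul_le_mul_of_nonneg_left hx2 (sq_nonneg x)]
    linarith

/-- `∑_{n ≥ 1000} f(n) < 7·10⁻⁸`. -/
theorem tailF_sum :
    Summable (fun m : ℕ => tailF (1000 + m)) ∧
    ∑' m : ℕ, tailF (1000 + m) < 7e-8 := by
  set ρ : ℝ := (5 / 6 : ℝ) ^ (10⁻¹ : ℝ)
  have hρ₀ : 0 ≤ ρ := by positivity
  have hρ : ρ ≤ 0.983 := five_sixths_rpow_inv_ten_le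
  have hmajorant := ((hasSum_coe_mul_geometric_of_norm_lt_one
    (r := ρ) (by rw [norm_of_nonneg hρ₀]; linarith)).mul_left ((5 / 6 : ℝ) ^ 130 / 3)).add
    ((hasSum_one_div_add_mul_add_add_one (by norm_num : (0 : ℝ) < 1000)).mul_left 1e-6)
  have hsummable := hmajorant.summable.of_nonneg_of_le (fun m => tailF_nonneg (by omega))
    tailF_add_le_majorant
  refine ⟨hsummable, (hasSum_le tailF_add_le_majorant hsummable.hasSum hmajorant).trans_lt ?_⟩
  have hgeom : ρ / (1 - ρ) ^ 2 ≤ 0.983 / (1 - 0.983) ^ 2 := by gcongr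
  norm_num at hgeom ⊢
  linarith
end

section
/- P(τ ≥ k) tends to 0 super-polynomially fast: in fact for all k > 1000, P(τ ≥ k) ≤ 5k·(1/3)·(5/6)^{0.9·k/ln k}. -/
/-!
Count the walks with steps in `{1, …, 6}` whose positions after the start avoid a set `P ⊆ ℕ`.
If `j` of the six positions following `s` lie in `P`, each of the other `6 - j` jumps over at most
`j` elements of `P`, and `(6 - j) (6/5)^j ≤ 6`; so by induction on the length, at most a fraction
`(5/6)^{#(P ∩ (s, T])}` of the walks from `s` avoid `P` and reach `T`. For `P` the primes and
`T = 2k`, the walks of length `k - 1` that stay below `2k` are exponentially rare by Chernoff's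
bound, and Chebyshev's bound `π(2k) ≥ 0.9 k / log k` concludes.
-/

open MeasureTheory ProbabilityTheory

open Finset Real

section AvoidingWalks

variable (P : ℕ → Prop) [DecidablePred P]

lemma card_filter_Ioc_le_add (s u T : ℕ) :
    #{n ∈ Ioc s T | P n} ≤ #{n ∈ Ioc s u | P n} + #{n ∈ Ioc u T | P n} := by
  refine (card_le_card ?_).trans (card_union_le _ _)
  intro n
  simp only [mem_union, mem_filter, mem_Ioc]
  grind

lemma card_filter_Icc_one_add (s m : ℕ) :
    #{v ∈ Icc 1 m | P (s + v)} = #{n ∈ Ioc s (s + m) | P n} := by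
  rw [← Icc_add_one_left_eq_Ioc, ← map_add_left_Icc, filter_map, card_map]
  rfl

lemma sum_six_fifths_pow_card_filter_Ioc_le (s : ℕ) :
    ∑ v ∈ Icc 1 6 with ¬P (s + v), (6 / 5 : ℝ) ^ #{n ∈ Ioc s (s + v) | P n} ≤ 6 := by
  set j := #{n ∈ Ioc s (s + 6) | P n} with hj
  have hcard : #{v ∈ Icc 1 6 | ¬P (s + v)} = 6 - j := by
    have := card_filter_add_card_filter_not (s := Icc 1 6) (fun v ↦ P (s + v))
    rw [card_filter_Icc_one_add, ← hj, Nat.card_Icc] at this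
    omega
  have hterm : ∀ v ∈ ({v ∈ Icc 1 6 | ¬P (s + v)} : Finset ℕ),
      (6 / 5 : ℝ) ^ #{n ∈ Ioc s (s + v) | P n} ≤ (6 / 5) ^ j := by
    intro v hv
    refine pow_le_pow_right₀ (by norm_num) (card_le_card (filter_subset_filter _ ?_))
    exact Ioc_subset_Ioc_right (by simp at hv; omega)
  calc _ ≤ ((6 - j : ℕ) : ℝ) * (6 / 5 : ℝ) ^ j := by
        simpa [hcard] using sum_le_sum hterm
    _ ≤ 6 := by
        have : j ≤ 6 := (card_filter_le _ _).trans (by simp)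
        interval_cases j <;> norm_num

lemma five_sixths_pow_le_of_le_add {a b c : ℕ} (h : a ≤ b + c) :
    (5 / 6 : ℝ) ^ c ≤ (5 / 6) ^ a * (6 / 5) ^ b :=
  calc (5 / 6 : ℝ) ^ c = (5 / 6) ^ (b + c) * (6 / 5) ^ b := by
        rw [pow_add, mul_right_comm, ← mul_pow]
        norm_num
    _ ≤ (5 / 6) ^ a * (6 / 5) ^ b := by
        gcongr ?_ * _
        exact pow_le_pow_of_le_one (by norm_num) (by norm_num) h

def avoidingWalks (r s T : ℕ) : Finset (Fin r → ℕ) :=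
  {y ∈ Fintype.piFinset fun _ ↦ Icc 1 6 |
    (∀ i : Fin r, ¬P (s + Fin.partialSum y i.succ)) ∧ T ≤ s + ∑ j, y j}

variable {P} in
lemma cons_mem_avoidingWalks {r s T a : ℕ} {z : Fin r → ℕ} :
    Fin.cons a z ∈ avoidingWalks P (r + 1) s T ↔
      (a ∈ Icc 1 6 ∧ ¬P (s + a)) ∧ z ∈ avoidingWalks P r (s + a) T := by
  simp only [avoidingWalks, mem_filter, Fintype.mem_piFinset, Fin.forall_fin_succ,
    Fin.cons_zero, Fin.cons_succ, Fin.partialSum_succ', Fin.tail_cons, Fin.partialSum_zero,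
    add_zero, Fin.sum_univ_succ, ← add_assoc]
  tauto

lemma card_avoidingWalks_succ_le (r s T : ℕ) :
    #(avoidingWalks P (r + 1) s T) ≤
      ∑ a ∈ Icc 1 6 with ¬P (s + a), #(avoidingWalks P r (s + a) T) := by
  rw [← card_sigma]
  refine card_le_card_of_injOn (fun y ↦ ⟨y 0, Fin.tail y⟩) (fun y hy ↦ ?_) ?_
  · rw [mem_coe, ← Fin.cons_self_tail y, cons_mem_avoidingWalks] at hy
    simpa using hy
  · intro y _ y' _ h
    simp only [Sigma.mk.injEq, heq_eq_eq] at h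
    rw [← Fin.cons_self_tail y, ← Fin.cons_self_tail y', h.1, h.2]

theorem card_avoidingWalks_le (r s T : ℕ) :
    (#(avoidingWalks P r s T) : ℝ) ≤ 6 ^ r * (5 / 6) ^ #{n ∈ Ioc s T | P n} := by
  induction r generalizing s with
  | zero =>
    by_cases hT : T ≤ s
    · have hcard : #(avoidingWalks P 0 s T) ≤ 1 := (card_filter_le _ _).trans (by simp)
      simpa [Ioc_eq_empty_of_le hT] using hcard
    · have hempty : avoidingWalks P 0 s T = ∅ := by
        ext y
        simp [avoidingWalks, hT]
      simp only [hempty, card_empty, Nat.cast_zero]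
      positivity
  | succ r ih =>
    calc (#(avoidingWalks P (r + 1) s T) : ℝ)
        ≤ ∑ a ∈ Icc 1 6 with ¬P (s + a),
            6 ^ r * (5 / 6 : ℝ) ^ #{n ∈ Ioc (s + a) T | P n} := by
          grw [card_avoidingWalks_succ_le]
          push_cast
          exact sum_le_sum fun a _ ↦ ih (s + a)
      _ ≤ ∑ a ∈ Icc 1 6 with ¬P (s + a),
            6 ^ r * ((5 / 6) ^ #{n ∈ Ioc s T | P n} *
              (6 / 5 : ℝ) ^ #{n ∈ Ioc s (s + a) | P n}) := by
          gcongr with a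
          exact five_sixths_pow_le_of_le_add (card_filter_Ioc_le_add P s (s + a) T)
      _ ≤ 6 ^ (r + 1) * (5 / 6) ^ #{n ∈ Ioc s T | P n} := by
          simp_rw [← mul_assoc, ← mul_sum, pow_succ, mul_right_comm _ (6 : ℝ)]
          gcongr
          exact sum_six_fifths_pow_card_filter_Ioc_le P s

end AvoidingWalks

theorem card_filter_sum_lt_le (r K : ℕ) :
    (#{y ∈ Fintype.piFinset (fun _ : Fin r ↦ Icc 1 6) | ∑ j, y j < K} : ℝ) ≤
      2 ^ K * (63 / 64) ^ r := by
  set D := Fintype.piFinset fun _ : Fin r ↦ Icc 1 6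
  have hgen : ∑ y ∈ D, ∏ j, (1 / 2 : ℝ) ^ y j = (63 / 64) ^ r := by
    rw [sum_prod_piFinset, prod_const, card_univ, Fintype.card_fin]
    norm_num [sum_Icc_succ_top]
  calc (#{y ∈ D | ∑ j, y j < K} : ℝ)
      = ∑ y ∈ D with ∑ j, y j < K, 1 := by simp
    _ ≤ ∑ y ∈ D with ∑ j, y j < K, 2 ^ K * ∏ j, (1 / 2 : ℝ) ^ y j := by
        refine sum_le_sum fun y hy ↦ ?_
        rw [prod_pow_eq_pow_sum]
        calc (1 : ℝ) = 2 ^ (∑ j, y j) * (1 / 2) ^ (∑ j, y j) := by rw [← mul_pow]; norm_num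
          _ ≤ 2 ^ K * (1 / 2) ^ (∑ j, y j) := by
            gcongr
            · norm_num
            · exact (mem_filter.1 hy).2.le
    _ ≤ 2 ^ K * ∑ y ∈ D, ∏ j, (1 / 2 : ℝ) ^ y j := by
        rw [← mul_sum]
        gcongr
        exact filter_subset _ _
    _ = 2 ^ K * (63 / 64) ^ r := by rw [hgen]

theorem Fin.partialSum_eq_sum_range {M : Type*} [AddCommMonoid M] {r : ℕ} (f : ℕ → M)
    (i : Fin (r + 1)) : Fin.partialSum (fun j : Fin r ↦ f j) i = ∑ j ∈ range i, f j := by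
  induction i using Fin.induction with
  | zero => simp
  | succ i ih => rw [Fin.partialSum_succ, ih, Fin.val_succ, sum_range_succ, Fin.val_castSucc]

theorem measure_tuple_mem_le {Ω β : Type*} [MeasurableSpace Ω] [MeasurableSpace β]
    [MeasurableSingletonClass β] {μ : Measure Ω} {X : ℕ → Ω → β} (hX : iIndepFun X μ)
    {A : Finset β} {c : ENNReal} (hA : ∀ i, ∀ v ∈ A, μ {ω | X i ω = v} = c) {r : ℕ}
    {S : Finset (Fin r → β)} (hS : S ⊆ Fintype.piFinset fun _ ↦ A) :
    μ {ω | (fun j : Fin r ↦ X j ω) ∈ S} ≤ #S * c ^ r := by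
  have hcover : {ω | (fun j : Fin r ↦ X j ω) ∈ S} ⊆
      ⋃ y ∈ S, ⋂ j : Fin r, {ω | X j ω = y j} := by
    intro ω hω
    simp only [Set.mem_iUnion, Set.mem_iInter, Set.mem_ofPred_eq]
    exact ⟨_, hω, fun j ↦ rfl⟩
  have hcell : ∀ y ∈ S, μ (⋂ j : Fin r, {ω | X j ω = y j}) = c ^ r := by
    intro y hy
    rw [(hX.precomp Fin.val_injective).meas_iInter (s := fun j : Fin r ↦ {ω | X j ω = y j})
      fun j ↦ ⟨{y j}, measurableSet_singleton _, rfl⟩]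
    simp [hA _ _ (Fintype.mem_piFinset.1 (hS hy) _)]
  calc μ {ω | (fun j : Fin r ↦ X j ω) ∈ S}
      ≤ ∑ y ∈ S, μ (⋂ j : Fin r, {ω | X j ω = y j}) :=
        (measure_mono hcover).trans (measure_biUnion_finset_le _ _)
    _ = #S * c ^ r := by rw [sum_congr rfl hcell, sum_const, nsmul_eq_mul]

theorem measureReal_forall_not_prime_diceSum_le {Ω : Type*} [MeasurableSpace Ω] {μ : Measure Ω}
    {X : ℕ → Ω → ℕ} (hindep : iIndepFun X μ)
    (hunif : ∀ i, ∀ v ∈ Icc 1 6, μ {ω | X i ω = v} = 1 / 6)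
    (hrange : ∀ i ω, X i ω ∈ Icc 1 6) (k K : ℕ) :
    μ.real {ω | ∀ i, 1 ≤ i → i < k → ¬ (diceSum X i ω).Prime} ≤
      2 ^ K * (21 / 128) ^ (k - 1) + (5 / 6) ^ Nat.primeCounting K := by
  set D := Fintype.piFinset fun _ : Fin (k - 1) ↦ Icc 1 6
  set S := {y ∈ D | ∑ j, y j < K} ∪ avoidingWalks Nat.Prime (k - 1) 0 K
  have hsub : {ω | ∀ i, 1 ≤ i → i < k → ¬ (diceSum X i ω).Prime} ⊆
      {ω | (fun j : Fin (k - 1) ↦ X j ω) ∈ S} := by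
    intro ω hω
    have hD : (fun j : Fin (k - 1) ↦ X j ω) ∈ D := Fintype.mem_piFinset.2 fun j ↦ hrange j ω
    by_cases hK : ∑ j : Fin (k - 1), X j ω < K
    · exact mem_union_left _ (mem_filter.2 ⟨hD, hK⟩)
    · refine mem_union_right _ (mem_filter.2 ⟨hD, fun i ↦ ?_, by simpa using hK⟩)
      rw [zero_add, Fin.partialSum_eq_sum_range fun j ↦ X j ω]
      exact hω (i + 1) (by omega) (by omega)
  have hcount : (#S : ℝ) ≤
      2 ^ K * (63 / 64) ^ (k - 1) + 6 ^ (k - 1) * (5 / 6) ^ Nat.primeCounting K := by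
    grw [card_union_le, Nat.cast_add, card_filter_sum_lt_le, card_avoidingWalks_le,
      ← Nat.primesLE_card_eq_primeCounting, Nat.primesLE_eq_filter_Ioc_zero]
  calc μ.real {ω | ∀ i, 1 ≤ i → i < k → ¬ (diceSum X i ω).Prime}
      ≤ (#S * (1 / 6) ^ (k - 1) : ENNReal).toReal :=
        ENNReal.toReal_mono (ENNReal.mul_ne_top (ENNReal.natCast_ne_top _) (by simp))
          ((measure_mono hsub).trans (measure_tuple_mem_le hindep hunif
            (union_subset (filter_subset _ _) (filter_subset _ _))))
    _ = #S * (1 / 6) ^ (k - 1) := by simp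
    _ ≤ (2 ^ K * (63 / 64) ^ (k - 1) + 6 ^ (k - 1) * (5 / 6) ^ Nat.primeCounting K) *
          (1 / 6) ^ (k - 1) := by
        gcongr
    _ = 2 ^ K * (21 / 128) ^ (k - 1) + (5 / 6) ^ Nat.primeCounting K := by
        rw [add_mul, mul_assoc, ← mul_pow, mul_right_comm, ← mul_pow]
        norm_num

theorem le_primeCounting_two_mul {k : ℕ} (hk : 512 ≤ k) :
    0.9 * (k : ℝ) / log k ≤ Nat.primeCounting (2 * k) := by
  have hk' : (512 : ℝ) ≤ k := by exact_mod_cast hk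
  have hk0 : (0 : ℝ) < k := by linarith
  obtain ⟨L, hLdef⟩ : ∃ L, L = log k := ⟨_, rfl⟩
  obtain ⟨a, hadef⟩ : ∃ a, a = log 2 := ⟨_, rfl⟩
  have ha : 0.6931471803 < a := hadef ▸ log_two_gt_d9
  have hL : 9 * a ≤ L := by
    calc 9 * a = log (2 ^ 9) := by rw [log_pow, hadef]; norm_num
      _ ≤ L := hLdef ▸ log_le_log (by norm_num) (by norm_num; exact hk)
  have hkL : L ^ 3 / 6 ≤ k := by
    have h := pow_div_factorial_le_exp L (by linarith) 3
    rwa [hLdef, exp_log hk0, ← hLdef] at h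
  have hlog2k : log (2 * k) = a + L := by rw [log_mul two_ne_zero hk0.ne', hadef, hLdef]
  have hlog2k1 : log (2 * k + 1) ≤ 2 * a + L := by
    calc log (2 * k + 1) ≤ log (2 ^ 2 * k) := log_le_log (by positivity) (by linarith)
      _ = 2 * a + L := by rw [log_mul (by norm_num) hk0.ne', log_pow, hadef, hLdef]; norm_num
  have hcoef : 2.4 ≤ (2 * a - 0.9) * L - 0.9 * a := by nlinarith
  have hcubic : 2 * a * L + L ^ 2 ≤ 0.4 * L ^ 3 := by nlinarith
  have hkey : 0.9 * k * (a + L) ≤ (2 * k * a - log (2 * k + 1)) * L := by nlinarith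
  calc 0.9 * (k : ℝ) / log k ≤ (2 * k * log 2 - log (2 * k + 1)) / log (2 * k) := by
        rw [div_le_div_iff₀ (by linarith) (by linarith), hlog2k, ← hLdef, ← hadef]
        exact hkey
    _ ≤ Nat.primeCounting (2 * k) := by exact_mod_cast Chebyshev.pi_ge (2 * k)

theorem four_mul_pow_le {r : ℕ} (hr : 7 ≤ r) :
    4 * (21 / 32 : ℝ) ^ r ≤ (5 / 6) ^ (r + 1) := by
  induction r, hr using Nat.le_induction with
  | base => norm_num
  | succ r _ ih =>
    calc 4 * (21 / 32 : ℝ) ^ (r + 1) = 4 * (21 / 32) ^ r * (21 / 32) := by ring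
      _ ≤ (5 / 6) ^ (r + 1) * (5 / 6) := mul_le_mul ih (by norm_num) (by norm_num) (by positivity)
      _ = (5 / 6) ^ (r + 1 + 1) := by ring

theorem two_pow_mul_add_pow_primeCounting_le {k : ℕ} (hk : 512 ≤ k) :
    2 ^ (2 * k) * (21 / 128 : ℝ) ^ (k - 1) + (5 / 6) ^ Nat.primeCounting (2 * k) ≤
      2 * (5 / 6 : ℝ) ^ (0.9 * (k : ℝ) / log k) := by
  set q := 0.9 * (k : ℝ) / log k
  have hpow : ∀ n : ℕ, q ≤ n → (5 / 6 : ℝ) ^ n ≤ (5 / 6) ^ q := fun n hn ↦ by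
    rw [← rpow_natCast]
    exact rpow_le_rpow_of_exponent_ge (by norm_num) (by norm_num) hn
  have hqk : q ≤ k := by
    have hk' : (512 : ℝ) ≤ k := by exact_mod_cast hk
    have hlog : 1 ≤ log k := by
      rw [le_log_iff_exp_le (by positivity)]
      linarith [exp_one_lt_d9]
    rw [div_le_iff₀ (by linarith)]
    nlinarith
  have hchernoff : 2 ^ (2 * k) * (21 / 128 : ℝ) ^ (k - 1) ≤ (5 / 6) ^ k := by
    obtain ⟨r, rfl⟩ : ∃ r, k = r + 1 := ⟨k - 1, by omega⟩
    calc 2 ^ (2 * (r + 1)) * (21 / 128 : ℝ) ^ (r + 1 - 1) = 4 * (21 / 32) ^ r := by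
          rw [Nat.add_sub_cancel, pow_mul, pow_succ, mul_right_comm, ← mul_pow]
          norm_num [mul_comm]
      _ ≤ (5 / 6) ^ (r + 1) := four_mul_pow_le (by omega)
  linarith [hchernoff.trans (hpow k hqk), hpow _ (le_primeCounting_two_mul hk)]

theorem tail_decay_general
    {Ω : Type*} [MeasurableSpace Ω] (μ : Measure Ω)
    (X : ℕ → Ω → ℕ)
    (hindep : iIndepFun X μ)
    (hunif : ∀ i v, v ∈ Finset.Icc 1 6 → μ {ω | X i ω = v} = 1/6)
    (hrange : ∀ i ω, X i ω ∈ Finset.Icc 1 6) :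
    ∀ k : ℕ, 1000 < k →
      (μ {ω | ∀ i, 1 ≤ i → i < k → ¬ (diceSum X i ω).Prime}).toReal ≤
        5 * (k : ℝ) * (1/3) * (5/6 : ℝ) ^ (0.9 * (k : ℝ) / Real.log k) := by
  intro k hk
  have hk' : (1000 : ℝ) < k := by exact_mod_cast hk
  calc (μ {ω | ∀ i, 1 ≤ i → i < k → ¬ (diceSum X i ω).Prime}).toReal
      ≤ 2 ^ (2 * k) * (21 / 128) ^ (k - 1) + (5 / 6) ^ Nat.primeCounting (2 * k) :=
        measureReal_forall_not_prime_diceSum_le hindep hunif hrange k (2 * k)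
    _ ≤ 2 * (5 / 6 : ℝ) ^ (0.9 * (k : ℝ) / log k) :=
        two_pow_mul_add_pow_primeCounting_le (by omega)
    _ ≤ 5 * (k : ℝ) * (1 / 3) * (5 / 6 : ℝ) ^ (0.9 * (k : ℝ) / log k) :=
        mul_le_mul_of_nonneg_right (by linarith) (by positivity)

/-- Super-polynomial decay of the tail: for all `k > 1000`,
`P(τ ≥ k) ≤ 5k·(1/3)·(5/6)^{0.9 k / ln k}`; here `τ ≥ k` means `S_i` is non-prime for
all `1 ≤ i < k`. -/
theorem tail_decay
    {Ω : Type*} [MeasurableSpace Ω] (μ : Measure Ω) [IsProbabilityMeasure μ]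
    (X : ℕ → Ω → ℕ) (hmeas : ∀ i, Measurable (X i))
    (hindep : iIndepFun X μ)
    (hunif : ∀ i v, v ∈ Finset.Icc 1 6 → μ {ω | X i ω = v} = 1/6)
    (hrange : ∀ i ω, X i ω ∈ Finset.Icc 1 6) :
    ∀ k : ℕ, 1000 < k →
      (μ {ω | ∀ i, 1 ≤ i → i < k → ¬ (diceSum X i ω).Prime}).toReal ≤
        5 * (k : ℝ) * (1/3) * (5/6 : ℝ) ^ (0.9 * (k : ℝ) / Real.log k) :=
  tail_decay_general μ X hindep hunif hrange
end
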